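/- Let G be a finite simple graph and let v be a vertex of G with deg_G(v) ≥ 1. Then γst(G) − deg_G(v) ≤ γst(G − v), where G − v denotes the graph obtained from G by deleting the vertex v. -/

import Mathlib

/-- The degree of a vertex `x` in a graph `G`. -/
noncomputable def sdeg {V : Type*} (G : SimpleGraph V) (x : V) : ℕ :=
  (G.neighborSet x).ncard

/-- `D` is a strong dominating set of `G`: every vertex `x ∉ D` has a neighbor
`y ∈ D` with `deg x ≤ deg y`. -/
def IsStrongDominating {V : Type*} (G : SimpleGraph V) (D : Set V) : Prop :=
  ∀ x ∉ D, ∃ y ∈ D, G.Adj x y ∧ sdeg G x ≤ sdeg G y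

/-- The strong domination number of `G`. -/
noncomputable def sdn {V : Type*} (G : SimpleGraph V) : ℕ :=
  sInf {n | ∃ D : Set V, IsStrongDominating G D ∧ D.ncard = n}

/-- Vertex deletion `G - v`: the induced subgraph on the complement of `{v}`. -/
def delVtx {V : Type*} (G : SimpleGraph V) (v : V) : SimpleGraph {x : V // x ≠ v} where
  Adj a b := G.Adj a.1 b.1
  symm := ⟨fun a b h => G.adj_symm h⟩
  loopless := ⟨fun a h => G.irrefl h⟩

/-- Vertex contraction `G / v`: delete `v` and put a clique on its open neighborhood. -/
def contractVtx {V : Type*} (G : SimpleGraph V) (v : V) : SimpleGraph {x : V // x ≠ v} where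
  Adj a b := a ≠ b ∧ (G.Adj a.1 b.1 ∨ (G.Adj v a.1 ∧ G.Adj v b.1))
  symm := ⟨by
    rintro a b ⟨hab, h | ⟨ha, hb⟩⟩
    · exact ⟨hab.symm, Or.inl h.symm⟩
    · exact ⟨hab.symm, Or.inr ⟨hb, ha⟩⟩⟩
  loopless := ⟨by rintro a ⟨h, -⟩; exact h rfl⟩

/-- `G ⊙ v`: remove all edges between any pair of neighbors of `v`. -/
def odotVtx {V : Type*} (G : SimpleGraph V) (v : V) : SimpleGraph V where
  Adj x y := G.Adj x y ∧ ¬(G.Adj v x ∧ G.Adj v y)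
  symm := ⟨by
    rintro x y ⟨h, hn⟩
    exact ⟨h.symm, fun hc => hn ⟨hc.2, hc.1⟩⟩⟩
  loopless := ⟨by rintro x ⟨h, -⟩; exact G.irrefl h⟩

/-- Edge contraction `G / uv`: merge `v` into `u`. -/
def contractEdge {V : Type*} (G : SimpleGraph V) (u v : V) : SimpleGraph {x : V // x ≠ v} where
  Adj a b := a ≠ b ∧ (G.Adj a.1 b.1 ∨ (a.1 = u ∧ G.Adj v b.1) ∨ (b.1 = u ∧ G.Adj v a.1))
  symm := ⟨by
    rintro a b ⟨hab, h | h | h⟩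
    · exact ⟨hab.symm, Or.inl h.symm⟩
    · exact ⟨hab.symm, Or.inr (Or.inr h)⟩
    · exact ⟨hab.symm, Or.inr (Or.inl h)⟩⟩
  loopless := ⟨by rintro a ⟨h, -⟩; exact h rfl⟩

/-- The star `K_{1,n}` with center `none` and leaves `some i`. -/
def starG (n : ℕ) : SimpleGraph (Option (Fin n)) where
  Adj a b := (a = none ∧ b ≠ none) ∨ (a ≠ none ∧ b = none)
  symm := ⟨by
    rintro a b (⟨h1, h2⟩ | ⟨h1, h2⟩)
    · exact Or.inr ⟨h2, h1⟩
    · exact Or.inl ⟨h2, h1⟩⟩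
  loopless := ⟨by
    rintro a (⟨h1, h2⟩ | ⟨h1, h2⟩)
    exacts [h2 h1, h1 h2]⟩

/-- The path graph `P_n` on vertices `0, …, n-1`, consecutive integers adjacent. -/
def pathG (n : ℕ) : SimpleGraph (Fin n) where
  Adj i j := i.1 + 1 = j.1 ∨ j.1 + 1 = i.1
  symm := ⟨fun i j h => h.symm⟩
  loopless := ⟨by rintro i (h | h) <;> omega⟩

/-!
Take a minimum strong dominating set `D'` of `G - v`. Deleting `v` lowers only the degrees of
the neighbours of `v`, so `D'` still strongly dominates every vertex outside the closed
neighbourhood `N[v]` in `G`. It remains to handle `N[v]` with at most `deg v` further vertices: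
if some neighbour `u` of `v` has `deg v ≤ deg u`, add `N(v)` (`u` dominates `v`); otherwise every
neighbour has smaller degree than `v`, and adding `v` together with all neighbours but one
suffices (`v` dominates the remaining one).
-/

lemma sdn_le_ncard {V : Type*} {G : SimpleGraph V} {D : Set V} (hD : IsStrongDominating G D) :
    sdn G ≤ D.ncard :=
  Nat.sInf_le ⟨D, hD, rfl⟩

lemma exists_isStrongDominating_ncard_eq_sdn {V : Type*} (G : SimpleGraph V) :
    ∃ D : Set V, IsStrongDominating G D ∧ D.ncard = sdn G :=
  Nat.sInf_mem (s := {n | ∃ D : Set V, IsStrongDominating G D ∧ D.ncard = n})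
    ⟨_, Set.univ, fun x hx => absurd (Set.mem_univ x) hx, rfl⟩

section

variable {V : Type*} (G : SimpleGraph V) (v : V)

lemma sdeg_delVtx (a : {x : V // x ≠ v}) :
    sdeg (delVtx G v) a = (G.neighborSet a \ {v}).ncard := by
  have himg : Subtype.val '' (delVtx G v).neighborSet a = G.neighborSet a \ {v} := by
    ext x
    constructor
    · rintro ⟨b, hb, rfl⟩
      exact ⟨hb, b.2⟩
    · rintro ⟨hx, hxv⟩
      exact ⟨⟨x, hxv⟩, hx, rfl⟩
  rw [sdeg, ← himg, Set.ncard_image_of_injective _ Subtype.val_injective]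

lemma sdeg_delVtx_le (a : {x : V // x ≠ v}) : sdeg (delVtx G v) a ≤ sdeg G a := by
  rw [sdeg_delVtx]
  exact Set.ncard_sdiff_singleton_le _ _

lemma sdeg_delVtx_of_not_adj {a : {x : V // x ≠ v}} (ha : ¬ G.Adj v a) :
    sdeg (delVtx G v) a = sdeg G a := by
  rw [sdeg_delVtx, sdeg,
    Set.sdiff_singleton_eq_self (s := G.neighborSet a) fun h => ha (G.adj_symm h)]

lemma isStrongDominating_image_union {D' : Set {x : V // x ≠ v}}
    (hD' : IsStrongDominating (delVtx G v) D') {S : Set V}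
    (hS : ∀ x, (x = v ∨ G.Adj v x) → x ∉ S → ∃ y ∈ S, G.Adj x y ∧ sdeg G x ≤ sdeg G y) :
    IsStrongDominating G (Subtype.val '' D' ∪ S) := by
  intro x hx
  rw [Set.mem_union, not_or] at hx
  by_cases hxN : x = v ∨ G.Adj v x
  · obtain ⟨y, hyS, hxy, hdeg⟩ := hS x hxN hx.2
    exact ⟨y, Or.inr hyS, hxy, hdeg⟩
  push Not at hxN
  obtain ⟨hxv, hvx⟩ := hxN
  obtain ⟨b, hb, hxb, hdeg⟩ := hD' ⟨x, hxv⟩ fun h => hx.1 ⟨_, h, rfl⟩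
  refine ⟨b, Or.inl ⟨b, hb, rfl⟩, hxb, ?_⟩
  calc sdeg G x = sdeg (delVtx G v) ⟨x, hxv⟩ :=
        (sdeg_delVtx_of_not_adj G v (a := ⟨x, hxv⟩) hvx).symm
    _ ≤ sdeg (delVtx G v) b := hdeg
    _ ≤ sdeg G b := sdeg_delVtx_le G v b

lemma exists_strongDominator_closedNbhd (hv : 1 ≤ sdeg G v) :
    ∃ S : Set V, S.ncard ≤ sdeg G v ∧
      ∀ x, (x = v ∨ G.Adj v x) → x ∉ S → ∃ y ∈ S, G.Adj x y ∧ sdeg G x ≤ sdeg G y := by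
  by_cases h : ∃ u, G.Adj v u ∧ sdeg G v ≤ sdeg G u
  · obtain ⟨u, hvu, hdeg⟩ := h
    refine ⟨G.neighborSet v, le_rfl, ?_⟩
    rintro x (rfl | hvx) hxS
    · exact ⟨u, hvu, hvu, hdeg⟩
    · exact absurd hvx hxS
  push Not at h
  obtain ⟨u, hvu⟩ := Set.nonempty_of_ncard_ne_zero (Nat.one_le_iff_ne_zero.mp hv)
  refine ⟨insert v (G.neighborSet v \ {u}), ?_, ?_⟩
  · calc (insert v (G.neighborSet v \ {u})).ncard ≤ (G.neighborSet v \ {u}).ncard + 1 :=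
          Set.ncard_insert_le _ _
      _ = sdeg G v := by rw [Set.ncard_sdiff_singleton_of_mem hvu]; exact Nat.sub_add_cancel hv
  · rintro x (rfl | hvx) hxS
    · exact absurd (Set.mem_insert x _) hxS
    · obtain rfl : x = u := by
        by_contra hxu
        exact hxS (Set.mem_insert_of_mem _ ⟨hvx, hxu⟩)
      exact ⟨v, Set.mem_insert v _, hvx.symm, (h x hvx).le⟩

end

theorem sdn_sub_deg_le_sdn_delVtx_general {V : Type*} (G : SimpleGraph V) (v : V)
    (hv : 1 ≤ sdeg G v) :
    (sdn G : ℤ) - (sdeg G v : ℤ) ≤ (sdn (delVtx G v) : ℤ) := by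
  obtain ⟨D', hD', hD'card⟩ := exists_isStrongDominating_ncard_eq_sdn (delVtx G v)
  obtain ⟨S, hScard, hS⟩ := exists_strongDominator_closedNbhd G v hv
  have key : sdn G ≤ sdn (delVtx G v) + sdeg G v :=
    calc sdn G ≤ (Subtype.val '' D' ∪ S).ncard :=
          sdn_le_ncard (isStrongDominating_image_union G v hD' hS)
      _ ≤ (Subtype.val '' D').ncard + S.ncard := Set.ncard_union_le _ _
      _ ≤ sdn (delVtx G v) + sdeg G v := by
          rw [Set.ncard_image_of_injective _ Subtype.val_injective, hD'card]
          omega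
  omega

/-- if deg_G(v) ≥ 1 then γst(G) − deg_G(v) ≤ γst(G − v). -/
theorem sdn_sub_deg_le_sdn_delVtx {V : Type*} [Fintype V] (G : SimpleGraph V) (v : V)
    (hv : 1 ≤ sdeg G v) :
    (sdn G : ℤ) - (sdeg G v : ℤ) ≤ (sdn (delVtx G v) : ℤ) :=
  sdn_sub_deg_le_sdn_delVtx_general G v hv
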